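/- arXiv:1701.05535 — 11 statements merged into one kernel-verified Lean document; each statement's English description precedes it below -/
import Mathlib

section
/- The intersection of the multibrot set M_3 with the imaginary axis is M_3 ∩ iℝ = {iy : y ∈ ℝ, |y| ≤ √(32/27)}. -/
/-!
On the imaginary axis `z ↦ z³ + iy` is conjugate, via `t ↦ t i`, to the real map `t ↦ y - t³`,
and `y ↦ -y` is a symmetry, so take `y ≥ 0`. This map is decreasing. For `y ≤ √(32/27)` it has a
2-cycle `p ≤ 0 ≤ q`, and then `[p, q]` is invariant and contains the orbit of `0`. For
`y > √(32/27)` the second iterate satisfies `f (f t) < t` on `(-∞, 0]`, so the even-indexed orbit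
of `0` strictly decreases; were it bounded it would converge to a fixed point of `f ∘ f` in
`(-∞, 0]`, which does not exist.
-/

open Filter Topology Set Function

theorem not_bddBelow_range_iterate_of_lt_self {g : ℝ → ℝ} (hg : Continuous g) {a x : ℝ}
    (hx : x ≤ a) (hlt : ∀ t ≤ a, g t < t) : ¬BddBelow (range fun n => g^[n] x) := by
  have hle : ∀ n, g^[n] x ≤ a := by
    intro n
    induction n with
    | zero => exact hx
    | succ n ih => rw [iterate_succ_apply']; exact (hlt _ ih).le.trans ih
  have hanti : StrictAnti fun n => g^[n] x :=
    strictAnti_nat_of_succ_lt fun n => by rw [iterate_succ_apply']; exact hlt _ (hle n)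
  intro hbdd
  have hlim := tendsto_atTop_ciInf hanti.antitone hbdd
  have hlim_le : ⨅ n, g^[n] x ≤ a := (ciInf_le hbdd 0).trans (hle 0)
  exact (hlt _ hlim_le).ne (isFixedPt_of_tendsto_iterate hlim hg.continuousAt)

def cubicRealMap (y t : ℝ) : ℝ := y - t ^ 3

theorem continuous_cubicRealMap (y : ℝ) : Continuous (cubicRealMap y) := by
  unfold cubicRealMap; fun_prop

theorem antitone_cubicRealMap (y : ℝ) : Antitone (cubicRealMap y) := fun _ _ h =>
  sub_le_sub_left ((Odd.strictMono_pow (by decide)).monotone h) y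

theorem iterate_cubicRealMap_neg (y : ℝ) (n : ℕ) :
    (cubicRealMap (-y))^[n] 0 = -(cubicRealMap y)^[n] 0 := by
  have h : Semiconj Neg.neg (cubicRealMap y) (cubicRealMap (-y)) := fun t => by
    simp only [cubicRealMap]; ring
  simpa using (h.iterate_right n 0).symm

theorem iterate_cube_add_mul_I (y : ℝ) (n : ℕ) :
    (fun z : ℂ => z ^ 3 + y * Complex.I)^[n] 0 = ((cubicRealMap y)^[n] 0 : ℝ) * Complex.I := by
  have h : Semiconj (fun t : ℝ => (t : ℂ) * Complex.I) (cubicRealMap y)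
      (fun z : ℂ => z ^ 3 + y * Complex.I) := fun t => by
    simp only [cubicRealMap]; push_cast
    linear_combination (-(t : ℂ) ^ 3 * Complex.I) * Complex.I_sq
  simpa using (h.iterate_right n 0).symm

theorem norm_iterate_cube_add_mul_I (y : ℝ) (n : ℕ) :
    ‖(fun z : ℂ => z ^ 3 + y * Complex.I)^[n] 0‖ = |(cubicRealMap y)^[n] 0| := by
  simp [iterate_cube_add_mul_I]

theorem exists_two_cycle_cubicRealMap {y : ℝ} (hy0 : 0 ≤ y) (hy : y ≤ √(32 / 27)) :
    ∃ p q : ℝ, p ≤ 0 ∧ 0 ≤ q ∧ cubicRealMap y p = q ∧ cubicRealMap y q = p := by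
  -- A 2-cycle `{p, q}` has `p + q = σ` and `p² + pq + q² = 1`, which forces `y = 2σ - σ³`;
  -- on `[0, √(2/3)]` the value `2σ - σ³` increases from `0` to `√(32/27)`.
  set w := √(2 / 3)
  have hw2 : w ^ 2 = 2 / 3 := Real.sq_sqrt (by norm_num)
  have hw0 : 0 ≤ w := Real.sqrt_nonneg _
  have hmax : 2 * w - w ^ 3 = 4 / 3 * w := by linear_combination -w * hw2
  have hy_le : y ≤ 2 * w - w ^ 3 := by
    nlinarith [(Real.le_sqrt hy0 (by norm_num)).1 hy]
  obtain ⟨σ, ⟨hσ0, hσw⟩, hσ⟩ := intermediate_value_Icc hw0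
    (f := fun σ : ℝ => 2 * σ - σ ^ 3) (by fun_prop) ⟨by simpa using hy0, hy_le⟩
  simp only at hσ
  have hσ2 : σ ^ 2 ≤ 2 / 3 := by nlinarith
  set r := √(4 - 3 * σ ^ 2)
  have hr2 : r ^ 2 = 4 - 3 * σ ^ 2 := Real.sq_sqrt (by nlinarith)
  have hσr : σ ≤ r := Real.le_sqrt_of_sq_le (by nlinarith)
  refine ⟨(σ - r) / 2, (σ + r) / 2, by linarith, by linarith, ?_, ?_⟩ <;> simp only [cubicRealMap]
  · linear_combination (r - 3 * σ) / 8 * hr2 - hσ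
  · linear_combination -(r + 3 * σ) / 8 * hr2 - hσ

theorem bddAbove_abs_iterate_cubicRealMap {y : ℝ} (hy0 : 0 ≤ y) (hy : y ≤ √(32 / 27)) :
    BddAbove (range fun n => |(cubicRealMap y)^[n] 0|) := by
  obtain ⟨p, q, hp, hq, hpq, hqp⟩ := exists_two_cycle_cubicRealMap hy0 hy
  have hmaps : MapsTo (cubicRealMap y) (Icc p q) (Icc p q) := by
    simpa only [hpq, hqp] using (antitone_cubicRealMap y).mapsTo_Icc (a := p) (b := q)
  refine ⟨max |p| |q|, forall_mem_range.2 fun n => ?_⟩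
  obtain ⟨hpn, hnq⟩ := hmaps.iterate n ⟨hp, hq⟩
  exact abs_le_max_abs_abs hpn hnq

-- `p² + pq + q² = 1` is the equation of a 2-cycle `{p, q}` of `cubicRealMap y`. For
-- `y = √(32/27)` equality holds at the 2-cycle point `s = -t`, where the squares used as
-- `nlinarith` hints below vanish.
theorem one_lt_cubicRealMap_sq_add_mul_add_sq {y t : ℝ} (hy : √(32 / 27) < y) (ht : t ≤ 0) :
    1 < cubicRealMap y t ^ 2 + cubicRealMap y t * t + t ^ 2 := by
  obtain ⟨s, hs, rfl⟩ : ∃ s, 0 ≤ s ∧ t = -s := ⟨-t, by linarith, by ring⟩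
  simp only [cubicRealMap]
  set b := √(32 / 27)
  have hb2 : b ^ 2 = 32 / 27 := Real.sq_sqrt (by norm_num)
  have hb1 : 1 ≤ b := Real.le_sqrt_of_sq_le (by norm_num)
  have haux : 0 < y + b + 2 * s ^ 3 - s := by
    nlinarith [mul_nonneg hs (sq_nonneg (s - 1)), sq_nonneg (2 * s - 3 / 4)]
  nlinarith [sq_nonneg (12 * s ^ 2 + 9 * b * s - 4), sq_nonneg (4 * s ^ 3 - 4 * s + b),
    mul_pos (sub_pos.2 hy) haux]

theorem cubicRealMap_cubicRealMap_lt {y t : ℝ} (hy : √(32 / 27) < y) (ht : t ≤ 0) :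
    cubicRealMap y (cubicRealMap y t) < t := by
  have hcycle := one_lt_cubicRealMap_sq_add_mul_add_sq hy ht
  set u := cubicRealMap y t with hu
  have hut : t < u := by
    simp only [hu, cubicRealMap]
    nlinarith [mul_nonneg (neg_nonneg.2 ht) (sq_nonneg t), (Real.sqrt_nonneg _).trans_lt hy]
  have hfactor : t - cubicRealMap y u = (u - t) * (u ^ 2 + u * t + t ^ 2 - 1) := by
    simp only [hu, cubicRealMap]; ring
  nlinarith [mul_pos (sub_pos.2 hut) (sub_pos.2 hcycle)]

theorem not_bddAbove_abs_iterate_cubicRealMap {y : ℝ} (hy : √(32 / 27) < y) :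
    ¬BddAbove (range fun n => |(cubicRealMap y)^[n] 0|) := by
  rintro ⟨C, hC⟩
  refine not_bddBelow_range_iterate_of_lt_self (g := (cubicRealMap y)^[2])
    ((continuous_cubicRealMap y).iterate 2) le_rfl
    (fun t ht => cubicRealMap_cubicRealMap_lt hy ht) ⟨-C, forall_mem_range.2 fun n => ?_⟩
  rw [← iterate_mul]
  exact neg_le_of_abs_le (hC (mem_range_self _))

theorem bddAbove_abs_iterate_cubicRealMap_iff (y : ℝ) :
    BddAbove (range fun n => |(cubicRealMap y)^[n] 0|) ↔ |y| ≤ √(32 / 27) := by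
  wlog hy0 : 0 ≤ y generalizing y
  · simpa only [iterate_cubicRealMap_neg, abs_neg] using this (-y) (by linarith)
  rw [abs_of_nonneg hy0]
  refine ⟨fun h => ?_, bddAbove_abs_iterate_cubicRealMap hy0⟩
  by_contra! hy
  exact not_bddAbove_abs_iterate_cubicRealMap hy h

/-- The intersection of the multibrot set `M_3` with the imaginary axis is
`{iy : |y| ≤ √(32/27)}`. -/
theorem stmt_1 :
    {c : ℂ | BddAbove (Set.range fun n => ‖(fun z : ℂ => z ^ 3 + c)^[n] 0‖)} ∩
      {c : ℂ | ∃ y : ℝ, c = (y : ℂ) * Complex.I} =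
    {c : ℂ | ∃ y : ℝ, |y| ≤ Real.sqrt (32 / 27) ∧ c = (y : ℂ) * Complex.I} := by
  ext c
  simp only [mem_inter_iff, mem_ofPred_eq]
  constructor
  · rintro ⟨hbdd, y, rfl⟩
    simp only [norm_iterate_cube_add_mul_I, bddAbove_abs_iterate_cubicRealMap_iff] at hbdd
    exact ⟨y, hbdd, rfl⟩
  · rintro ⟨y, hy, rfl⟩
    simp only [norm_iterate_cube_add_mul_I, bddAbove_abs_iterate_cubicRealMap_iff]
    exact ⟨hy, y, rfl⟩
end

section
/- Let d be an odd integer with d ≥ 3. Then N_d ∩ ℝ⁺ = [0, μ(d)], where μ(d) := max{a - b^d : a, b ≥ 0, a^d + b^d = a + b}. -/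
/-!
On the real axis the map is `f(x) = t - x ^ d`, which is decreasing because `d` is odd, so
`f ∘ f` is increasing and the even iterates of `0` form a monotone sequence. If the orbit is
bounded, they converge to some `-b ≤ 0` with `f (f (-b)) = -b`, and `a = f (-b)` then satisfies
`a ^ d + b ^ d = a + b` and `t = a - b ^ d`, whence `t ≤ μ`. Conversely, for `0 ≤ t ≤ μ` the
interval `[-b, t + b ^ d]` is `f`-invariant as soon as `(t + b ^ d) ^ d ≤ t + b`; one can take
`b = 0` when `t ≤ 1`, and otherwise the `b` of a maximiser `(a, b)` of `μ`, because
`x ↦ x ^ d - x` is increasing on `[1, ∞)`.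
-/

open Set Filter Function

lemma sub_le_pow_sub_pow {R : Type*} [CommRing R] [LinearOrder R] [IsStrictOrderedRing R]
    {x y : R} {n : ℕ} (hn : n ≠ 0) (hy : 1 ≤ y) (hyx : y ≤ x) :
    x - y ≤ x ^ n - y ^ n := by
  obtain ⟨m, rfl⟩ := Nat.exists_eq_succ_of_ne_zero hn
  have hx : 0 ≤ x := zero_le_one.trans (hy.trans hyx)
  calc x - y ≤ y ^ m * (x - y) := le_mul_of_one_le_left (sub_nonneg.2 hyx) (one_le_pow₀ hy)
    _ = y ^ m * x - y ^ (m + 1) := by ring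
    _ ≤ x ^ m * x - y ^ (m + 1) := by gcongr
    _ = x ^ (m + 1) - y ^ (m + 1) := by ring

lemma exists_isFixedPt_le_of_map_le {α : Type*} [ConditionallyCompleteLinearOrder α]
    [TopologicalSpace α] [OrderTopology α] {g : α → α} (hg : Monotone g) (hc : Continuous g)
    {x : α} (hx : g x ≤ x) (hbdd : BddBelow (range fun n => g^[n] x)) :
    ∃ y ≤ x, IsFixedPt g y :=
  ⟨⨅ n, g^[n] x, ciInf_le hbdd 0,
    isFixedPt_of_tendsto_iterate
      (tendsto_atTop_ciInf (hg.antitone_iterate_of_map_le hx) hbdd) hc.continuousAt⟩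

section RealOrbit

variable {d : ℕ} {t : ℝ}

lemma exists_pow_add_pow_eq_of_bddAbove_orbit (hodd : Odd d) (ht : 1 ≤ t)
    (hbdd : BddAbove (range fun n => |(fun x : ℝ => t - x ^ d)^[n] 0|)) :
    ∃ a b : ℝ, 0 ≤ a ∧ 0 ≤ b ∧ a ^ d + b ^ d = a + b ∧ t = a - b ^ d := by
  set f : ℝ → ℝ := fun x => t - x ^ d
  have hf : Antitone f := fun x y h => sub_le_sub_left (hodd.strictMono_pow.monotone h) t
  have hbelow : BddBelow (range fun n => (f^[2])^[n] 0) := by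
    obtain ⟨M, hM⟩ := hbdd
    refine ⟨-M, forall_mem_range.2 fun n => ?_⟩
    rw [← iterate_mul]
    exact neg_le_of_abs_le (hM (mem_range_self _))
  have hstart : f^[2] 0 ≤ 0 := by
    show t - (t - 0 ^ d) ^ d ≤ 0
    rw [zero_pow hodd.pos.ne', sub_zero, sub_nonpos]
    exact le_self_pow₀ ht hodd.pos.ne'
  obtain ⟨y, hy, hfix⟩ := exists_isFixedPt_le_of_map_le (hf.comp hf)
    (by fun_prop) hstart hbelow
  have hfix : t - (t - y ^ d) ^ d = y := hfix
  have hyd : y ^ d ≤ 0 := hodd.pow_nonpos hy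
  refine ⟨t - y ^ d, -y, by linarith, by linarith, ?_, ?_⟩ <;> rw [hodd.neg_pow] <;> linarith

lemma mapsTo_Icc_sub_pow (hodd : Odd d) {b : ℝ} (h : (t + b ^ d) ^ d ≤ t + b) :
    MapsTo (fun x : ℝ => t - x ^ d) (Icc (-b) (t + b ^ d)) (Icc (-b) (t + b ^ d)) := by
  rintro x ⟨hbx, hxa⟩
  have hmono := (hodd.strictMono_pow (R := ℝ)).monotone
  have h₁ := hmono hxa
  have h₂ := hmono hbx
  simp only [hodd.neg_pow] at h₂
  constructor <;> simp only <;> linarith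

lemma bddAbove_orbit_of_pow_le (hodd : Odd d) (ht : 0 ≤ t) {b : ℝ} (hb : 0 ≤ b)
    (h : (t + b ^ d) ^ d ≤ t + b) :
    BddAbove (range fun n => |(fun x : ℝ => t - x ^ d)^[n] 0|) := by
  have h0 : (0 : ℝ) ∈ Icc (-b) (t + b ^ d) := ⟨by linarith, by positivity⟩
  refine ⟨max |-b| |t + b ^ d|, forall_mem_range.2 fun n => ?_⟩
  obtain ⟨hlo, hhi⟩ := (mapsTo_Icc_sub_pow hodd h).iterate n h0
  exact abs_le_max_abs_abs hlo hhi

lemma exists_pow_le_of_le_sub_pow (hd : d ≠ 0) (ht : 0 ≤ t) {a b : ℝ} (hb : 0 ≤ b)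
    (hab : a ^ d + b ^ d = a + b) (hta : t ≤ a - b ^ d) :
    ∃ c ≥ 0, (t + c ^ d) ^ d ≤ t + c := by
  rcases le_or_gt t 1 with ht1 | ht1
  · exact ⟨0, le_rfl, by simpa [hd] using pow_le_of_le_one ht ht1 hd⟩
  · refine ⟨b, hb, ?_⟩
    have := sub_le_pow_sub_pow hd (by linarith [pow_nonneg hb d] : 1 ≤ t + b ^ d)
      (by linarith : t + b ^ d ≤ a)
    linarith

end RealOrbit

lemma bddAbove_norm_iterate_ofReal_iff (d : ℕ) (t : ℝ) :
    BddAbove (range fun n => ‖(fun z : ℂ => -z ^ d + t)^[n] 0‖) ↔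
      BddAbove (range fun n => |(fun x : ℝ => t - x ^ d)^[n] 0|) := by
  have hsemi : Semiconj ((↑) : ℝ → ℂ) (fun x => t - x ^ d) (fun z => -z ^ d + t) :=
    fun x => by push_cast; ring
  have horbit (n : ℕ) :
      (fun z : ℂ => -z ^ d + t)^[n] 0 = ((fun x : ℝ => t - x ^ d)^[n] 0 : ℝ) := by
    simpa using (hsemi.iterate_right n 0).symm
  simp only [horbit, Complex.norm_real, Real.norm_eq_abs]

theorem stmt_3_general (d : ℕ) (hodd : Odd d) (μ : ℝ)
    (hμ : IsGreatest {x : ℝ | ∃ a b : ℝ, 0 ≤ a ∧ 0 ≤ b ∧ a ^ d + b ^ d = a + b ∧ x = a - b ^ d} μ) :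
    {c : ℂ | BddAbove (Set.range fun n => ‖(fun z : ℂ => -z ^ d + c)^[n] 0‖)} ∩
      {c : ℂ | ∃ t : ℝ, 0 ≤ t ∧ c = (t : ℂ)} =
    {c : ℂ | ∃ t : ℝ, 0 ≤ t ∧ t ≤ μ ∧ c = (t : ℂ)} := by
  have hd : d ≠ 0 := hodd.pos.ne'
  ext c
  simp only [mem_inter_iff, mem_ofPred_eq]
  constructor
  · rintro ⟨hbdd, t, ht0, rfl⟩
    rw [bddAbove_norm_iterate_ofReal_iff] at hbdd
    refine ⟨t, ht0, ?_, rfl⟩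
    rcases le_or_gt t 1 with ht1 | ht1
    · exact ht1.trans (hμ.2 ⟨1, 0, zero_le_one, le_rfl, by simp [hd], by simp [hd]⟩)
    · exact hμ.2 (exists_pow_add_pow_eq_of_bddAbove_orbit hodd ht1.le hbdd)
  · rintro ⟨t, ht0, htμ, rfl⟩
    obtain ⟨a, b, -, hb, hab, rfl⟩ := hμ.1
    obtain ⟨r, hr, hpow⟩ := exists_pow_le_of_le_sub_pow hd ht0 hb hab htμ
    exact ⟨(bddAbove_norm_iterate_ofReal_iff d t).2 (bddAbove_orbit_of_pow_le hodd ht0 hr hpow),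
      t, ht0, rfl⟩

/-- For odd `d ≥ 3`, the intersection of `N_d = {c : ℂ | orbit of 0 under z ↦ -z^d + c bounded}`
with the nonnegative real axis is `[0, μ(d)]`, where
`μ(d) = max {a - b^d : a, b ≥ 0, a^d + b^d = a + b}`. -/
theorem stmt_3 (d : ℕ) (hd : 3 ≤ d) (hodd : Odd d) (μ : ℝ)
    (hμ : IsGreatest {x : ℝ | ∃ a b : ℝ, 0 ≤ a ∧ 0 ≤ b ∧ a ^ d + b ^ d = a + b ∧ x = a - b ^ d} μ) :
    {c : ℂ | BddAbove (Set.range fun n => ‖(fun z : ℂ => -z ^ d + c)^[n] 0‖)} ∩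
      {c : ℂ | ∃ t : ℝ, 0 ≤ t ∧ c = (t : ℂ)} =
    {c : ℂ | ∃ t : ℝ, 0 ≤ t ∧ t ≤ μ ∧ c = (t : ℂ)} :=
  stmt_3_general d hodd μ hμ
end

section
/- Let d be an odd integer with d ≥ 3. Then μ(d) = γ(d), where μ(d) := max{a - b^d : a, b ≥ 0, a^d + b^d = a + b}, γ(d) := d^{-d/(d-1)}(sinh(d ξ_d) + d sinh(ξ_d)), and ξ_d is the unique positive root of cosh(d ξ) = d cosh(ξ). -/
/-!
With `c = d^(-1/(d-1))`, the point `(a₀, b₀) = (c e^ξ, c e^(-ξ))` lies on the curve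
`a^d + b^d = a + b` exactly because `cosh (d ξ) = d cosh ξ`, and there `a₀ - b₀^d = γ(d)`.
It is a Lagrange point: the tangent slopes `d a₀^(d-1) = E` and `d b₀^(d-1) = E⁻¹`, with
`E = e^((d-1) ξ) > 1`, are reciprocal. Since `x ↦ x^d` is convex on `[0, ∞)`, its tangent lines
at `a₀` and `b₀` lie below it, and combining the two tangent-line bounds with weights `1` and `E`
along the constraint gives `(E - 1)(a - b^d) ≤ (E - 1)(a₀ - b₀^d)` for every point of the curve.
-/

open Real

lemma natCast_mul_pow_pred_mul_le_pow_sub_pow {α : Type*} [Field α] [LinearOrder α]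
    [IsStrictOrderedRing α] (n : ℕ) {x m : α} (hx : 0 ≤ x) (hm : 0 < m) :
    n * m ^ (n - 1) * (x - m) ≤ x ^ n - m ^ n := by
  cases n with
  | zero => simp
  | succ k =>
    have hbern := one_add_mul_le_pow (a := x / m - 1) (by linarith [div_nonneg hx hm.le]) (k + 1)
    have hscaled := mul_le_mul_of_nonneg_left hbern (pow_pos hm (k + 1)).le
    rw [add_sub_cancel, div_pow, mul_div_cancel₀ _ (pow_pos hm _).ne'] at hscaled
    rw [Nat.add_sub_cancel]
    have hexpand : m ^ (k + 1) * (1 + ((k + 1 : ℕ) : α) * (x / m - 1))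
        = m ^ (k + 1) + ((k + 1 : ℕ) : α) * m ^ k * (x - m) := by
      field_simp
      ring
    linarith

theorem sub_pow_le_sub_pow_of_tangent {n : ℕ} {a b a₀ b₀ E : ℝ} (ha : 0 ≤ a) (hb : 0 ≤ b)
    (ha₀ : 0 < a₀) (hb₀ : 0 < b₀) (hE : 1 < E) (hEa : n * a₀ ^ (n - 1) = E)
    (hEb : n * b₀ ^ (n - 1) * E = 1) (h₀ : a₀ ^ n + b₀ ^ n = a₀ + b₀)
    (h : a ^ n + b ^ n = a + b) : a - b ^ n ≤ a₀ - b₀ ^ n := by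
  have hta := natCast_mul_pow_pred_mul_le_pow_sub_pow n ha ha₀
  have htb := mul_le_mul_of_nonneg_right (natCast_mul_pow_pred_mul_le_pow_sub_pow n hb hb₀)
    (zero_le_one.trans hE.le)
  rw [hEa] at hta
  have htb' : b - b₀ ≤ (b ^ n - b₀ ^ n) * E := by
    linear_combination htb - (b - b₀) * hEb
  have hmul : (E - 1) * (a - b ^ n) ≤ (E - 1) * (a₀ - b₀ ^ n) := by
    linear_combination hta + htb' + h - h₀
  exact le_of_mul_le_mul_left hmul (sub_pos.2 hE)

section

variable {n : ℕ} {c : ℝ}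

lemma natCast_mul_pow_eq_self_of_mul_pow_pred_eq_one (hc : (n : ℝ) * c ^ (n - 1) = 1) :
    (n : ℝ) * c ^ n = c := by
  obtain ⟨k, rfl⟩ : ∃ k, n = k + 1 := Nat.exists_eq_succ_of_ne_zero (by rintro rfl; simp at hc)
  rw [Nat.add_sub_cancel] at hc
  rw [pow_succ, ← mul_assoc, hc, one_mul]

lemma natCast_mul_mul_exp_pow_pred (hc : (n : ℝ) * c ^ (n - 1) = 1) (ξ : ℝ) :
    (n : ℝ) * (c * exp ξ) ^ (n - 1) = exp ((n - 1 : ℕ) * ξ) := by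
  rw [mul_pow, ← mul_assoc, hc, one_mul, ← exp_nat_mul]

lemma mul_exp_pow_add_mul_exp_neg_pow (hc : (n : ℝ) * c ^ (n - 1) = 1) {ξ : ℝ}
    (hξ : cosh (n * ξ) = n * cosh ξ) :
    (c * exp ξ) ^ n + (c * exp (-ξ)) ^ n = c * exp ξ + c * exp (-ξ) := by
  have hcn := natCast_mul_pow_eq_self_of_mul_pow_pred_eq_one hc
  rw [cosh_eq, cosh_eq] at hξ
  rw [mul_pow, mul_pow, ← exp_nat_mul, ← exp_nat_mul, mul_neg]
  linear_combination c ^ n * 2 * hξ + (exp ξ + exp (-ξ)) * hcn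

lemma mul_exp_sub_mul_exp_neg_pow (hc : (n : ℝ) * c ^ (n - 1) = 1) {ξ : ℝ}
    (hξ : cosh (n * ξ) = n * cosh ξ) :
    c * exp ξ - (c * exp (-ξ)) ^ n = c ^ n * (sinh (n * ξ) + n * sinh ξ) := by
  have hcn := natCast_mul_pow_eq_self_of_mul_pow_pred_eq_one hc
  rw [mul_pow, ← exp_nat_mul, mul_neg, ← cosh_sub_sinh, ← cosh_add_sinh, hξ]
  linear_combination (-(cosh ξ + sinh ξ)) * hcn

end

lemma natCast_mul_rpow_pow_pred {n : ℕ} (hn : 2 ≤ n) :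
    (n : ℝ) * ((n : ℝ) ^ (-((n : ℝ) - 1)⁻¹)) ^ (n - 1) = 1 := by
  have hn1 : ((n - 1 : ℕ) : ℝ) = (n : ℝ) - 1 := by rw [Nat.cast_pred (by omega)]
  have hn1' : (n : ℝ) - 1 ≠ 0 := by rw [← hn1]; exact_mod_cast (by omega : n - 1 ≠ 0)
  rw [← rpow_mul_natCast (Nat.cast_nonneg n), hn1, neg_mul, inv_mul_cancel₀ hn1', rpow_neg_one,
    mul_inv_cancel₀ (by positivity)]

lemma rpow_pow_eq_rpow_neg_div (n : ℕ) :
    ((n : ℝ) ^ (-((n : ℝ) - 1)⁻¹)) ^ n = (n : ℝ) ^ (-(n : ℝ) / ((n : ℝ) - 1)) := by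
  rw [← rpow_mul_natCast (Nat.cast_nonneg n)]
  ring_nf

theorem stmt_4_general (d : ℕ) (hd : 3 ≤ d) (μ : ℝ)
    (hμ : IsGreatest {x : ℝ | ∃ a b : ℝ, 0 ≤ a ∧ 0 ≤ b ∧ a ^ d + b ^ d = a + b ∧ x = a - b ^ d} μ)
    (ξ : ℝ) (hξpos : 0 < ξ)
    (hξ : Real.cosh ((d : ℝ) * ξ) = (d : ℝ) * Real.cosh ξ) :
    μ = (d : ℝ) ^ (-(d : ℝ) / ((d : ℝ) - 1)) *
          (Real.sinh ((d : ℝ) * ξ) + (d : ℝ) * Real.sinh ξ) := by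
  set c := (d : ℝ) ^ (-((d : ℝ) - 1)⁻¹)
  have hc : (d : ℝ) * c ^ (d - 1) = 1 := natCast_mul_rpow_pow_pred (by omega)
  have hc₀ : 0 < c := by positivity
  have hE : 1 < exp ((d - 1 : ℕ) * ξ) :=
    one_lt_exp_iff.2 (mul_pos (by exact_mod_cast (by omega : 0 < d - 1)) hξpos)
  have hEb : (d : ℝ) * (c * exp (-ξ)) ^ (d - 1) * exp ((d - 1 : ℕ) * ξ) = 1 := by
    rw [natCast_mul_mul_exp_pow_pred hc, ← exp_add, mul_neg, neg_add_cancel, exp_zero]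
  have hcrit := mul_exp_pow_add_mul_exp_neg_pow hc hξ
  have hmax : IsGreatest {x : ℝ | ∃ a b : ℝ, 0 ≤ a ∧ 0 ≤ b ∧ a ^ d + b ^ d = a + b ∧
      x = a - b ^ d} (c * exp ξ - (c * exp (-ξ)) ^ d) := by
    refine ⟨⟨_, _, by positivity, by positivity, hcrit, rfl⟩, ?_⟩
    rintro _ ⟨a, b, ha, hb, h, rfl⟩
    exact sub_pow_le_sub_pow_of_tangent ha hb (by positivity) (by positivity) hE
      (natCast_mul_mul_exp_pow_pred hc ξ) hEb hcrit h
  rw [hμ.unique hmax, mul_exp_sub_mul_exp_neg_pow hc hξ, rpow_pow_eq_rpow_neg_div]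

/-- For odd `d ≥ 3`, `μ(d) = γ(d)`: the maximum of `a - b^d` over
`{a, b ≥ 0 : a^d + b^d = a + b}` equals `d^(-d/(d-1)) * (sinh (d ξ) + d sinh ξ)`,
where `ξ` is the unique positive root of `cosh (d ξ) = d cosh ξ`. -/
theorem stmt_4 (d : ℕ) (hd : 3 ≤ d) (hodd : Odd d) (μ : ℝ)
    (hμ : IsGreatest {x : ℝ | ∃ a b : ℝ, 0 ≤ a ∧ 0 ≤ b ∧ a ^ d + b ^ d = a + b ∧ x = a - b ^ d} μ)
    (ξ : ℝ) (hξpos : 0 < ξ)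
    (hξ : Real.cosh ((d : ℝ) * ξ) = (d : ℝ) * Real.cosh ξ)
    (hξuniq : ∀ x : ℝ, 0 < x → Real.cosh ((d : ℝ) * x) = (d : ℝ) * Real.cosh x → x = ξ) :
    μ = (d : ℝ) ^ (-(d : ℝ) / ((d : ℝ) - 1)) *
          (Real.sinh ((d : ℝ) * ξ) + (d : ℝ) * Real.sinh ξ) :=
  stmt_4_general d hd μ hμ ξ hξpos hξ
end

section
/- There exist constants C > 0 and d_0 > 1 such that for all real d ≥ d_0, |log γ(d) - (log 2)/d| ≤ C (log d)²/d²; equivalently, γ(d) = 2^{1/d + O((log d)²/d²)} as d → ∞. -/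
/-!
Write `t = d ξ`. The equation `cosh t = d cosh ξ` forces `eᵗ ≥ d` and `eᵗ = 2d cosh ξ - e⁻ᵗ`,
so `t = log (2d) + O(ξ² + 1/d²)` and in particular `ξ = O(log d / d)`. Since `cosh ± sinh = exp`,
one has exactly `sinh t + d sinh ξ = d e^ξ - e⁻ᵗ`, and then `log γ(d) - (log 2)/d` splits as
`log (1 - e⁻ᵗ/(d e^ξ)) + (t - log (2d))/d - log d/(d(d-1))`, each term being
`O((log d)²/d²)`.
-/

open Real

lemma Real.cosh_le_exp_of_nonneg {x : ℝ} (hx : 0 ≤ x) : cosh x ≤ exp x := by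
  linarith [cosh_add_sinh x, sinh_nonneg_iff.2 hx]

lemma Real.log_cosh_le_sq_div_two (x : ℝ) : log (cosh x) ≤ x ^ 2 / 2 := by
  rw [log_le_iff_le_exp (cosh_pos x)]
  exact cosh_le_exp_half_sq x

lemma Real.abs_log_one_sub_le {y : ℝ} (hy₀ : 0 ≤ y) (hy : y ≤ 1 / 2) :
    |log (1 - y)| ≤ 2 * y := by
  have h := abs_log_sub_add_sum_range_le (x := y) (by rw [abs_of_nonneg hy₀]; linarith) 0
  rw [Finset.sum_range_zero, zero_add, abs_of_nonneg hy₀, pow_one] at h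
  calc |log (1 - y)| ≤ y / (1 - y) := h
    _ ≤ 2 * y := by rw [div_le_iff₀ (by linarith)]; nlinarith

section CoshEquation

variable {d x t : ℝ}

theorem le_exp_of_cosh_eq_mul_cosh (hd : 0 ≤ d) (ht : 0 ≤ t) (h : cosh t = d * cosh x) :
    d ≤ exp t :=
  calc d ≤ d * cosh x := le_mul_of_one_le_right hd (one_le_cosh x)
    _ = cosh t := h.symm
    _ ≤ exp t := cosh_le_exp_of_nonneg ht

theorem le_log_two_mul_add_log_cosh (hd : 0 < d) (h : cosh t = d * cosh x) :
    t ≤ log (2 * d) + log (cosh x) := by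
  rw [← log_mul (by positivity) (cosh_pos x).ne', le_log_iff_exp_le (by positivity), mul_assoc,
    ← h, cosh_eq]
  linarith [exp_pos (-t)]

theorem log_two_mul_le_add_exp_neg_sq (hd : 0 < d) (h : cosh t = d * cosh x) :
    log (2 * d) ≤ t + exp (-t) ^ 2 := by
  have h2d : 2 * d ≤ exp t * (1 + exp (-t) ^ 2) := by
    have : exp t * exp (-t) = 1 := by rw [← exp_add, add_neg_cancel, exp_zero]
    have := le_mul_of_one_le_right hd.le (one_le_cosh x)
    rw [← h, cosh_eq] at this
    nlinarith
  calc log (2 * d) ≤ log (exp t * (1 + exp (-t) ^ 2)) := log_le_log (by positivity) h2d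
    _ = t + log (1 + exp (-t) ^ 2) := by rw [log_mul (exp_pos t).ne' (by positivity), log_exp]
    _ ≤ t + exp (-t) ^ 2 := by
      linarith [log_le_sub_one_of_pos (by positivity : 0 < 1 + exp (-t) ^ 2)]

theorem sinh_add_mul_sinh_eq (h : cosh t = d * cosh x) :
    sinh t + d * sinh x = d * exp x - exp (-t) := by
  rw [← cosh_add_sinh x, ← cosh_sub_sinh t, h]; ring

end CoshEquation

section RootEstimates

variable {d x : ℝ}

theorem exp_neg_mul_le_one_div (hd : 0 < d) (hx : 0 ≤ x) (h : cosh (d * x) = d * cosh x) :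
    exp (-(d * x)) ≤ 1 / d := by
  rw [exp_neg, one_div]
  exact inv_anti₀ hd (le_exp_of_cosh_eq_mul_cosh hd.le (by positivity) h)

theorem abs_mul_sub_log_two_mul_le (hd : 0 < d) (hx : 0 ≤ x) (h : cosh (d * x) = d * cosh x) :
    |d * x - log (2 * d)| ≤ x ^ 2 / 2 + 1 / d ^ 2 := by
  have hsq : exp (-(d * x)) ^ 2 ≤ 1 / d ^ 2 := by
    rw [one_div, ← inv_pow, ← one_div]; gcongr; exact exp_neg_mul_le_one_div hd hx h
  rw [abs_le]
  constructor
  · linarith [log_two_mul_le_add_exp_neg_sq hd h, sq_nonneg x]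
  · linarith [le_log_two_mul_add_log_cosh hd h, log_cosh_le_sq_div_two x,
      one_div_nonneg.2 (sq_nonneg d)]

theorem le_three_mul_log_div (hd : 3 ≤ d) (hx : 0 ≤ x) (h : cosh (d * x) = d * cosh x) :
    x ≤ 3 * log d / d := by
  have hd0 : 0 < d := by linarith
  have hcosh : log (cosh x) ≤ x := (log_le_iff_le_exp (cosh_pos x)).2 (cosh_le_exp_of_nonneg hx)
  have hlog2 : log 2 ≤ log d := log_le_log (by norm_num) (by linarith)
  have := le_log_two_mul_add_log_cosh hd0 h
  rw [log_mul two_ne_zero hd0.ne'] at this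
  rw [le_div_iff₀ hd0]
  nlinarith

theorem log_rpow_mul_sub_eq {e : ℝ} (hd : 1 < d) (he : e < d * exp x) :
    log (d ^ (-d / (d - 1)) * (d * exp x - e)) - log 2 / d
      = log (1 - e / (d * exp x)) + (d * x - log (2 * d)) / d - log d / (d * (d - 1)) := by
  have hd0 : 0 < d := by linarith
  have hde : 0 < d * exp x := by positivity
  have hy : 0 < 1 - e / (d * exp x) := by rw [sub_pos, div_lt_one hde]; exact he
  have hsplit : d * exp x - e = d * exp x * (1 - e / (d * exp x)) := by field_simp
  rw [hsplit, log_mul (by positivity) (by positivity), log_mul (by positivity) hy.ne',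
    log_mul hd0.ne' (exp_pos x).ne', log_rpow hd0, log_exp, log_mul two_ne_zero hd0.ne']
  have : d - 1 ≠ 0 := by linarith
  field_simp
  ring

end RootEstimates

theorem abs_log_rpow_mul_sinh_add_sub_le {d x : ℝ} (hd : 3 ≤ d) (hx : 0 < x)
    (h : cosh (d * x) = d * cosh x) :
    |log (d ^ (-d / (d - 1)) * (sinh (d * x) + d * sinh x)) - log 2 / d|
      ≤ 10 * log d ^ 2 / d ^ 2 := by
  have hd0 : 0 < d := by linarith
  set L := log d
  have hL : 1 ≤ L := by rw [le_log_iff_exp_le hd0]; linarith [exp_one_lt_d9]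
  have hunit : 1 / d ^ 2 ≤ L ^ 2 / d ^ 2 := by gcongr; nlinarith
  have hexp := exp_neg_mul_le_one_div hd0 hx.le h
  have hdexp : d ≤ d * exp x := le_mul_of_one_le_right hd0.le (one_le_exp hx.le)
  have hy : exp (-(d * x)) / (d * exp x) ≤ 1 / d ^ 2 := by
    calc exp (-(d * x)) / (d * exp x) ≤ (1 / d) / d := by gcongr
      _ = 1 / d ^ 2 := by ring
  have hd2 : 1 / d ^ 2 ≤ 1 / 2 := by gcongr; nlinarith
  have hrem : exp (-(d * x)) < d * exp x := by
    have : 1 / d < d := by rw [div_lt_iff₀ hd0]; nlinarith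
    linarith
  rw [sinh_add_mul_sinh_eq h, log_rpow_mul_sub_eq (by linarith) hrem]
  have h₁ : |log (1 - exp (-(d * x)) / (d * exp x))| ≤ 2 * (L ^ 2 / d ^ 2) :=
    (abs_log_one_sub_le (by positivity) (by linarith)).trans (by linarith)
  have h₂ : |(d * x - log (2 * d)) / d| ≤ 6 * (L ^ 2 / d ^ 2) := by
    have hxsq : x ^ 2 ≤ 9 * (L ^ 2 / d ^ 2) := by
      calc x ^ 2 ≤ (3 * L / d) ^ 2 := by gcongr; exact le_three_mul_log_div hd hx.le h
        _ = 9 * (L ^ 2 / d ^ 2) := by ring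
    rw [abs_div, abs_of_pos hd0, div_le_iff₀ hd0]
    have := abs_mul_sub_log_two_mul_le hd0 hx.le h
    nlinarith [abs_nonneg (d * x - log (2 * d))]
  have h₃ : |L / (d * (d - 1))| ≤ 2 * (L ^ 2 / d ^ 2) := by
    have hd1 : 0 < d - 1 := by linarith
    rw [abs_of_pos (div_pos (by linarith) (by positivity))]
    calc L / (d * (d - 1)) ≤ L ^ 2 / (d ^ 2 / 2) :=
          div_le_div₀ (sq_nonneg L) (by nlinarith) (by positivity) (by nlinarith)
      _ = 2 * (L ^ 2 / d ^ 2) := by ring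
  calc _ ≤ |log (1 - exp (-(d * x)) / (d * exp x)) + (d * x - log (2 * d)) / d|
        + |L / (d * (d - 1))| := abs_sub _ _
    _ ≤ |log (1 - exp (-(d * x)) / (d * exp x))| + |(d * x - log (2 * d)) / d|
        + |L / (d * (d - 1))| := by gcongr; exact abs_add_le _ _
    _ ≤ 10 * L ^ 2 / d ^ 2 := by rw [mul_div_assoc]; linarith

/-- Asymptotics of `γ(d)`: if for each real `d > 1`, `ξ d` is the unique positive root of
`cosh (d ξ) = d cosh ξ`, and `γ d = d^(-d/(d-1)) * (sinh (d ξ d) + d sinh (ξ d))`, then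
`log (γ d) = (log 2)/d + O((log d)²/d²)` as `d → ∞`, i.e. `γ(d) = 2^(1/d + O((log d)²/d²))`. -/
theorem stmt_5 (ξ : ℝ → ℝ)
    (hξ : ∀ d : ℝ, 1 < d → 0 < ξ d ∧ Real.cosh (d * ξ d) = d * Real.cosh (ξ d)) :
    ∃ C : ℝ, 0 < C ∧ ∃ d₀ : ℝ, 1 < d₀ ∧ ∀ d : ℝ, d₀ ≤ d →
      |Real.log (d ^ (-d / (d - 1)) * (Real.sinh (d * ξ d) + d * Real.sinh (ξ d)))
          - Real.log 2 / d| ≤ C * (Real.log d) ^ 2 / d ^ 2 := by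
  refine ⟨10, by norm_num, 3, by norm_num, fun d hd => ?_⟩
  obtain ⟨hpos, hroot⟩ := hξ d (by linarith)
  exact abs_log_rpow_mul_sinh_add_sub_le hd hpos hroot
end

section
/- For every real d > 1, the equation cosh(d x) = d cosh(x) has exactly one root x > 0. -/
/-!
With `f x = cosh (d x) - d cosh x` we have `f 0 = 1 - d < 0` and
`f' x = d (sinh (d x) - sinh x) > 0` for `x > 0`, so `f` is strictly increasing on `[0, ∞)`;
since `cosh (d x)` grows like `exp (d x)` it eventually exceeds `d cosh x ≤ d exp x`, and the
intermediate value theorem gives the root.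
-/

open Real Set

theorem StrictMonoOn.existsUnique_Ioi_eq_zero {f : ℝ → ℝ} {a b : ℝ}
    (hmono : StrictMonoOn f (Ici a)) (hcont : ContinuousOn f (Ici a))
    (ha : f a < 0) (hab : a ≤ b) (hb : 0 < f b) : ∃! x, a < x ∧ f x = 0 := by
  obtain ⟨x, hx, hfx⟩ := intermediate_value_Ioo hab (hcont.mono Icc_subset_Ici_self) ⟨ha, hb⟩
  refine ⟨x, ⟨hx.1, hfx⟩, fun y ⟨hy, hfy⟩ => ?_⟩
  exact hmono.injOn (mem_Ici.2 hy.le) (mem_Ici.2 hx.1.le) (hfy.trans hfx.symm)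

theorem strictMonoOn_cosh_mul_sub_mul_cosh {d : ℝ} (hd : 1 < d) :
    StrictMonoOn (fun x => cosh (d * x) - d * cosh x) (Ici 0) := by
  have hderiv (x : ℝ) : HasDerivAt (fun x => cosh (d * x) - d * cosh x)
      (sinh (d * x) * d - d * sinh x) x := by
    have hlin : HasDerivAt (fun x => d * x) d x := by simpa using (hasDerivAt_id x).const_mul d
    exact hlin.cosh.sub ((hasDerivAt_cosh x).const_mul d)
  refine strictMonoOn_of_deriv_pos (convex_Ici 0) (by fun_prop) fun x hx => ?_
  rw [interior_Ici, mem_Ioi] at hx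
  have hsinh : sinh x < sinh (d * x) := sinh_lt_sinh.2 (by nlinarith)
  rw [(hderiv x).deriv]
  nlinarith

theorem exists_pos_mul_cosh_lt_cosh_mul {d : ℝ} (hd : 1 < d) :
    ∃ x, 0 < x ∧ d * cosh x < cosh (d * x) := by
  have hd1 : 0 < d - 1 := sub_pos.2 hd
  set x := 2 * d / (d - 1)
  have hx : 0 < x := by positivity
  -- `x` is chosen so that `exp ((d - 1) x) = exp (2 d) > 1 + 2 d`.
  have hgap : 2 * d < exp ((d - 1) * x) := by
    rw [show (d - 1) * x = 2 * d by simp only [x]; field_simp]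
    linarith [add_one_lt_exp (show 2 * d ≠ 0 by positivity)]
  refine ⟨x, hx, ?_⟩
  calc d * cosh x ≤ d * exp x := by
        rw [cosh_eq]
        gcongr
        linarith [exp_le_exp.2 (show -x ≤ x by linarith)]
    _ < exp (d * x) / 2 := by
        rw [show d * x = (d - 1) * x + x by ring, exp_add]
        nlinarith [exp_pos x]
    _ ≤ cosh (d * x) := by
        rw [cosh_eq]
        linarith [exp_pos (-(d * x))]

/-- For every real `d > 1`, the equation `cosh (d x) = d cosh x` has exactly one
positive root. -/
theorem stmt_6 (d : ℝ) (hd : 1 < d) :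
    ∃! x : ℝ, 0 < x ∧ Real.cosh (d * x) = d * Real.cosh x := by
  obtain ⟨b, hb, hfb⟩ := exists_pos_mul_cosh_lt_cosh_mul hd
  have hroot := (strictMonoOn_cosh_mul_sub_mul_cosh hd).existsUnique_Ioi_eq_zero
    (by fun_prop) (by simpa using hd) hb.le (sub_pos.2 hfb)
  simpa only [sub_eq_zero] using hroot
end

section
/- For every real d ≥ 2, γ(d) > 1, where γ(d) := d^{-d/(d-1)}(sinh(d ξ_d) + d sinh(ξ_d)) and ξ_d is the unique positive root of cosh(d ξ) = d cosh(ξ). -/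
/-!
Put `a = exp ((d - 1) ξ)`, `x = exp ((d + 1) ξ) = a ^ t` with `t = (d + 1) / (d - 1)`.
The equation `cosh (d ξ) = d cosh ξ` becomes the hyperbola `(a - d) (x - d) = d² - 1`, and
`(sinh (d ξ) + d sinh ξ)² = d (x + x⁻¹) - d² - 1`. As `d ^ (2d / (d - 1)) = d · d ^ t`, it suffices
to show `x ≥ d ^ t + d + d⁻¹`. Otherwise the hyperbola forces `a > d + (d² - 1) / (d ^ t + d⁻¹)`,
and Bernoulli's inequality for the `t`-th power of this bound gives `x ≥ d ^ t + d + d⁻¹` anyway.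
-/

open Real

section
variable {d : ℝ}

lemma rpow_add_add_inv_le_rpow (hd : 1 < d) :
    d ^ ((d + 1) / (d - 1)) + d + d⁻¹ ≤
      (d + (d ^ 2 - 1) / (d ^ ((d + 1) / (d - 1)) + d⁻¹)) ^ ((d + 1) / (d - 1)) := by
  set t := (d + 1) / (d - 1) with ht
  set u := d ^ t
  have hd0 : 0 < d := by linarith
  have hd1 : d - 1 ≠ 0 := by linarith
  have ht1 : 1 ≤ t := by rw [ht, le_div_iff₀ (by linarith)]; linarith
  have hdu : d ≤ u := by simpa using rpow_le_rpow_of_exponent_le hd.le ht1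
  have hβ : 0 ≤ (d ^ 2 - 1) / (d * u + 1) := div_nonneg (by nlinarith) (by positivity)
  have htβ : t * ((d ^ 2 - 1) / (d * u + 1)) = (d + 1) ^ 2 / (d * u + 1) := by
    rw [ht]; field_simp; ring
  calc u + d + d⁻¹ ≤ u * (1 + t * ((d ^ 2 - 1) / (d * u + 1))) := by
        rw [htβ, mul_one_add, mul_div_assoc', add_assoc, add_le_add_iff_left,
          le_div_iff₀ (by positivity)]
        field_simp
        nlinarith
    _ ≤ u * (1 + (d ^ 2 - 1) / (d * u + 1)) ^ t := by
        gcongr; exact one_add_mul_self_le_rpow_one_add (by linarith) ht1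
    _ = (d * (1 + (d ^ 2 - 1) / (d * u + 1))) ^ t := by
        rw [mul_rpow hd0.le (by linarith)]
    _ = (d + (d ^ 2 - 1) / (u + d⁻¹)) ^ t := by
        congr 1; field_simp

lemma rpow_add_add_inv_le_of_mul_eq (hd : 1 < d) {a : ℝ} (ha : 1 < a)
    (h : (a - d) * (a ^ ((d + 1) / (d - 1)) - d) = d ^ 2 - 1) :
    d ^ ((d + 1) / (d - 1)) + d + d⁻¹ ≤ a ^ ((d + 1) / (d - 1)) := by
  set t := (d + 1) / (d - 1) with ht
  set x := a ^ t
  have ht0 : 0 < t := div_pos (by linarith) (by linarith)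
  by_contra! hx
  have hx0 : 0 < x := by positivity
  have had : d < a := by nlinarith
  have hxd : 0 < x - d := by nlinarith
  have hlt : d + (d ^ 2 - 1) / (d ^ t + d⁻¹) < a := by
    have hsmaller : (d ^ 2 - 1) / (d ^ t + d⁻¹) < (d ^ 2 - 1) / (x - d) :=
      div_lt_div_of_pos_left (by nlinarith) hxd (by linarith)
    have hsub : (d ^ 2 - 1) / (x - d) = a - d := by rw [← h, mul_div_cancel_right₀ _ hxd.ne']
    linarith
  have hβ : 0 ≤ (d ^ 2 - 1) / (d ^ t + d⁻¹) := div_nonneg (by nlinarith) (by positivity)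
  have := rpow_lt_rpow (by positivity) hlt ht0
  linarith [rpow_add_add_inv_le_rpow hd]

end

section
variable {d ξ : ℝ}

lemma exp_sub_mul_exp_sub_eq_of_cosh_mul_eq (h : cosh (d * ξ) = d * cosh ξ) :
    (exp ((d - 1) * ξ) - d) * (exp ((d + 1) * ξ) - d) = d ^ 2 - 1 := by
  rw [sub_one_mul, add_one_mul, exp_sub, exp_add]
  rw [cosh_eq, cosh_eq, exp_neg, exp_neg] at h
  have hE := exp_ne_zero (d * ξ)
  have he := exp_ne_zero ξ
  field_simp
  field_simp at h
  linear_combination h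

lemma sinh_mul_add_mul_sinh_sq (h : cosh (d * ξ) = d * cosh ξ) :
    (sinh (d * ξ) + d * sinh ξ) ^ 2 = 2 * d * cosh ((d + 1) * ξ) - (d ^ 2 + 1) := by
  rw [add_one_mul, cosh_add]
  -- after `sinh² = cosh² - 1` the difference of the two sides is `(cosh (d ξ) - d cosh ξ)²`
  linear_combination (cosh (d * ξ) - d * cosh ξ) * h - cosh_sq (d * ξ) - d ^ 2 * cosh_sq ξ

lemma rpow_lt_sinh_mul_add_mul_sinh (hd : 1 < d) (hξ : 0 < ξ) (h : cosh (d * ξ) = d * cosh ξ) :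
    d ^ (d / (d - 1)) < sinh (d * ξ) + d * sinh ξ := by
  set t := (d + 1) / (d - 1) with ht
  have hd0 : 0 < d := by linarith
  have hd1 : d - 1 ≠ 0 := by linarith
  have hx : exp ((d + 1) * ξ) = exp ((d - 1) * ξ) ^ t := by
    rw [← exp_mul]; congr 1; rw [ht]; field_simp
  have hxlow := rpow_add_add_inv_le_of_mul_eq hd (one_lt_exp_iff.mpr (by nlinarith))
    (hx ▸ exp_sub_mul_exp_sub_eq_of_cosh_mul_eq h)
  rw [← hx] at hxlow
  have hcosh : exp ((d + 1) * ξ) < 2 * cosh ((d + 1) * ξ) := by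
    rw [cosh_eq]; linarith [exp_pos (-((d + 1) * ξ))]
  have hsq : (d ^ (d / (d - 1))) ^ 2 = d * d ^ t := by
    rw [← rpow_natCast, ← rpow_mul hd0.le, ← rpow_one_add' hd0.le]
    · congr 1; rw [ht]; field_simp; ring
    · rw [ht]; positivity
  have hsinh : 0 < sinh (d * ξ) + d * sinh ξ := by
    have := sinh_pos_iff.mpr hξ
    have := sinh_pos_iff.mpr (mul_pos hd0 hξ)
    positivity
  apply lt_of_pow_lt_pow_left₀ 2 hsinh.le
  rw [hsq, sinh_mul_add_mul_sinh_sq h]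
  have : d * d⁻¹ = 1 := mul_inv_cancel₀ hd0.ne'
  nlinarith

end

theorem stmt_8_general (d : ℝ) (hd : 2 ≤ d) (ξ : ℝ) (hξpos : 0 < ξ)
    (hξ : Real.cosh (d * ξ) = d * Real.cosh ξ) :
    1 < d ^ (-d / (d - 1)) * (Real.sinh (d * ξ) + d * Real.sinh ξ) := by
  rw [neg_div, Real.rpow_neg (by linarith), one_lt_inv_mul₀ (by positivity)]
  exact rpow_lt_sinh_mul_add_mul_sinh (by linarith) hξpos hξ

/-- For every real `d ≥ 2`, `γ(d) > 1`, where
`γ(d) = d^(-d/(d-1)) * (sinh (d ξ) + d sinh ξ)` and `ξ` is the unique positive root of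
`cosh (d ξ) = d cosh ξ`. -/
theorem stmt_8 (d : ℝ) (hd : 2 ≤ d) (ξ : ℝ) (hξpos : 0 < ξ)
    (hξ : Real.cosh (d * ξ) = d * Real.cosh ξ)
    (hξuniq : ∀ x : ℝ, 0 < x → Real.cosh (d * x) = d * Real.cosh x → x = ξ) :
    1 < d ^ (-d / (d - 1)) * (Real.sinh (d * ξ) + d * Real.sinh ξ) :=
  stmt_8_general d hd ξ hξpos hξ
end

section
/- Let d be an integer with d ≥ 2. Then the closed disk of center 0 and radius α(d) := (d-1) d^{-d/(d-1)} is contained in the multibrot set M_d; that is, if |c| ≤ (d-1) d^{-d/(d-1)}, then the sequence p_c^{[n]}(0) is bounded. -/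
/-!
If `r ^ d + ‖c‖ ≤ r`, the closed ball of radius `r` is mapped into itself by `z ↦ z ^ d + c`,
so the orbit of `0` stays in it. The function `r ↦ r - r ^ d` attains its maximum on `r ≥ 0` at
`r = d ^ (-1/(d-1))`, and the maximum value is exactly `α(d) = (d-1) d^(-d/(d-1))`; hence such an
`r` exists whenever `‖c‖ ≤ α(d)`.
-/

theorem norm_iterate_pow_add_le {R : Type*} [SeminormedRing R] [NormOneClass R] {d : ℕ} {c : R}
    {r : ℝ} (h : r ^ d + ‖c‖ ≤ r) {z : R} (hz : ‖z‖ ≤ r) (n : ℕ) :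
    ‖(fun w : R => w ^ d + c)^[n] z‖ ≤ r := by
  induction n with
  | zero => exact hz
  | succ n ih =>
    rw [Function.iterate_succ_apply']
    calc ‖((fun w : R => w ^ d + c)^[n] z) ^ d + c‖
        ≤ ‖(fun w : R => w ^ d + c)^[n] z‖ ^ d + ‖c‖ :=
          (norm_add_le _ _).trans (add_le_add_left (norm_pow_le _ _) _)
      _ ≤ r ^ d + ‖c‖ := by gcongr
      _ ≤ r := h

theorem rpow_neg_inv_pow_add_eq {d : ℕ} (hd : 1 < d) :
    ((d : ℝ) ^ (-1 / ((d : ℝ) - 1))) ^ d + ((d : ℝ) - 1) * (d : ℝ) ^ (-(d : ℝ) / ((d : ℝ) - 1))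
      = (d : ℝ) ^ (-1 / ((d : ℝ) - 1)) := by
  have hd_pos : (0 : ℝ) < d := by positivity
  have hd_sub : (d : ℝ) - 1 ≠ 0 := sub_ne_zero.mpr (by exact_mod_cast hd.ne')
  have h_pow : ((d : ℝ) ^ (-1 / ((d : ℝ) - 1))) ^ d = (d : ℝ) ^ (-(d : ℝ) / ((d : ℝ) - 1)) := by
    rw [← Real.rpow_natCast, ← Real.rpow_mul hd_pos.le]
    congr 1
    field_simp
  have h_mul : (d : ℝ) * (d : ℝ) ^ (-(d : ℝ) / ((d : ℝ) - 1)) = (d : ℝ) ^ (-1 / ((d : ℝ) - 1)) := by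
    conv_lhs => arg 1; rw [← Real.rpow_one (d : ℝ)]
    rw [← Real.rpow_add hd_pos]
    congr 1
    field_simp
    ring
  rw [h_pow]
  linear_combination h_mul

/-- The closed disk of radius `α(d) = (d-1) d^(-d/(d-1))` is contained in `M_d`:
if `|c| ≤ α(d)` then the orbit of `0` under `z ↦ z^d + c` is bounded. -/
theorem stmt_10 (d : ℕ) (hd : 2 ≤ d) (c : ℂ)
    (hc : ‖c‖ ≤ ((d : ℝ) - 1) * (d : ℝ) ^ (-(d : ℝ) / ((d : ℝ) - 1))) :
    BddAbove (Set.range fun n => ‖(fun z : ℂ => z ^ d + c)^[n] 0‖) := by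
  set r : ℝ := (d : ℝ) ^ (-1 / ((d : ℝ) - 1))
  have hr : r ^ d + ‖c‖ ≤ r := by
    have := rpow_neg_inv_pow_add_eq hd
    linarith
  have h_zero : ‖(0 : ℂ)‖ ≤ r := by
    rw [norm_zero]
    positivity
  refine ⟨r, ?_⟩
  rintro _ ⟨n, rfl⟩
  exact norm_iterate_pow_add_le hr h_zero n
end

section
/- Let d be an integer with d ≥ 2. Then the multibrot set M_d is contained in the closed disk of center 0 and radius β(d) := 2^{1/(d-1)}; that is, if the sequence p_c^{[n]}(0) is bounded, then |c| ≤ 2^{1/(d-1)}. -/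
/-!
If `r := ‖c‖` satisfies `r ^ (d - 1) > 2`, then `λ := r ^ (d - 1) - 1 > 1`, and every `z` with
`‖z‖ ≥ r` satisfies `‖z ^ d + c‖ ≥ ‖z‖ ^ d - ‖z‖ ≥ λ ‖z‖`. The orbit of `0` starts at `c`, so it
stays outside the disk of radius `r` and grows at least like `λ ^ n r`; hence it is unbounded.
-/

open Filter Set

theorem mul_norm_le_norm_pow_succ_add {𝕜 : Type*} [NormedDivisionRing 𝕜] {z c : 𝕜} (d : ℕ)
    (hcz : ‖c‖ ≤ ‖z‖) : (‖c‖ ^ d - 1) * ‖z‖ ≤ ‖z ^ (d + 1) + c‖ :=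
  calc (‖c‖ ^ d - 1) * ‖z‖ ≤ (‖z‖ ^ d - 1) * ‖z‖ := by gcongr
    _ = ‖z ^ (d + 1)‖ - ‖z‖ := by rw [norm_pow]; ring
    _ ≤ ‖z ^ (d + 1)‖ - ‖-c‖ := by rw [norm_neg]; linarith
    _ ≤ ‖z ^ (d + 1) + c‖ := by simpa using norm_sub_norm_le (z ^ (d + 1)) (-c)

theorem pow_mul_norm_le_norm_iterate_pow_succ_add {𝕜 : Type*} [NormedDivisionRing 𝕜] {c : 𝕜}
    (d : ℕ) (hc : 2 ≤ ‖c‖ ^ d) (n : ℕ) :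
    (‖c‖ ^ d - 1) ^ n * ‖c‖ ≤ ‖(fun z : 𝕜 => z ^ (d + 1) + c)^[n + 1] 0‖ := by
  induction n with
  | zero => simp
  | succ n ih =>
    rw [Function.iterate_succ_apply']
    set z := (fun z : 𝕜 => z ^ (d + 1) + c)^[n + 1] 0
    have hcz : ‖c‖ ≤ ‖z‖ :=
      (le_mul_of_one_le_left (norm_nonneg c) (one_le_pow₀ (by linarith))).trans ih
    calc (‖c‖ ^ d - 1) ^ (n + 1) * ‖c‖ = (‖c‖ ^ d - 1) * ((‖c‖ ^ d - 1) ^ n * ‖c‖) := by ring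
      _ ≤ (‖c‖ ^ d - 1) * ‖z‖ := by gcongr; linarith
      _ ≤ ‖z ^ (d + 1) + c‖ := mul_norm_le_norm_pow_succ_add d hcz

theorem tendsto_norm_iterate_pow_succ_add_atTop {𝕜 : Type*} [NormedDivisionRing 𝕜] {c : 𝕜}
    (d : ℕ) (hc : 2 < ‖c‖ ^ d) :
    Tendsto (fun n => ‖(fun z : 𝕜 => z ^ (d + 1) + c)^[n] 0‖) atTop atTop := by
  have hc₀ : 0 < ‖c‖ :=
    lt_of_pow_lt_pow_left₀ d (norm_nonneg c)
      ((pow_le_one₀ le_rfl zero_le_one).trans_lt (by linarith))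
  have hgeom : Tendsto (fun n => (‖c‖ ^ d - 1) ^ n * ‖c‖) atTop atTop :=
    (tendsto_pow_atTop_atTop_of_one_lt (by linarith)).atTop_mul_const hc₀
  exact (tendsto_add_atTop_iff_nat 1).1 <| tendsto_atTop_mono
    (pow_mul_norm_le_norm_iterate_pow_succ_add d hc.le) hgeom

/-- `M_d` is contained in the closed disk of radius `β(d) = 2^(1/(d-1))`:
if the orbit of `0` under `z ↦ z^d + c` is bounded, then `|c| ≤ 2^(1/(d-1))`. -/
theorem stmt_11 (d : ℕ) (hd : 2 ≤ d) (c : ℂ)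
    (hc : BddAbove (Set.range fun n => ‖(fun z : ℂ => z ^ d + c)^[n] 0‖)) :
    ‖c‖ ≤ (2 : ℝ) ^ ((1 : ℝ) / ((d : ℝ) - 1)) := by
  obtain ⟨k, rfl⟩ : ∃ k, d = k + 1 := ⟨d - 1, by omega⟩
  have hk : (0 : ℝ) < k := by exact_mod_cast (by omega : 0 < k)
  have hexp : ((k + 1 : ℕ) : ℝ) - 1 = k := by push_cast; ring
  rw [hexp, one_div, Real.le_rpow_inv_iff_of_pos (norm_nonneg c) zero_le_two hk,
    Real.rpow_natCast]
  exact le_of_not_gt fun h =>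
    not_bddAbove_of_tendsto_atTop (tendsto_norm_iterate_pow_succ_add_atTop k h) hc
end

section
/- Let d be an odd integer with d ≥ 3. Then N_d ∩ [1, ∞) = {a - b^d : a, b ≥ 0, a^d + b^d = a + b} ∩ [1, ∞). -/
/-!
For real `c = t ≥ 1` the orbit of `0` stays real, and `f x = -x ^ d + t` is a decreasing
homeomorphism of `ℝ` because `d` is odd. Hence `f ∘ f` is increasing, so the even iterates
`0, f t = t - t ^ d, …` decrease (here `t ≥ 1` is used). If the orbit is bounded they converge
to a fixed point `-b ≤ 0` of `f ∘ f`, and `a = f (-b)` closes a 2-cycle `-b ↦ a ↦ -b`,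
which is exactly `a ^ d + b ^ d = a + b` with `t = a - b ^ d`. Conversely such a 2-cycle
bounds the invariant interval `[-b, a] ∋ 0`.
-/

open Filter Topology Set Function

theorem Antitone.mapsTo_Icc_of_two_cycle {α : Type*} [Preorder α] {f : α → α} (hf : Antitone f)
    {l u : α} (hl : f l = u) (hu : f u = l) : MapsTo f (Icc l u) (Icc l u) :=
  fun _ hx => ⟨hu ▸ hf hx.2, hl ▸ hf hx.1⟩

theorem Antitone.exists_two_periodic_le {α : Type*} [ConditionallyCompleteLinearOrder α]
    [TopologicalSpace α] [OrderTopology α] {f : α → α} (hf : Antitone f) (hcont : Continuous f)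
    {x : α} (hx : f (f x) ≤ x) (hbdd : BddBelow (range fun n => f^[n] x)) :
    ∃ L ≤ x, f (f L) = L := by
  set g := f^[2]
  have hg : Monotone g := hf.comp hf
  have hanti : Antitone fun n => g^[n] x := hg.antitone_iterate_of_map_le hx
  have hbdd' : BddBelow (range fun n => g^[n] x) :=
    hbdd.mono <| range_subset_iff.2 fun n => mem_range.2 ⟨2 * n, by simp only [g, ← iterate_mul]⟩
  have hlim := tendsto_atTop_ciInf hanti hbdd'
  refine ⟨⨅ n, g^[n] x, ciInf_le hbdd' 0, ?_⟩
  exact isFixedPt_of_tendsto_iterate hlim (hcont.comp hcont).continuousAt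

section NegPowAdd

variable {d : ℕ}

theorem antitone_neg_pow_add (hodd : Odd d) (t : ℝ) : Antitone fun x : ℝ => -x ^ d + t :=
  fun _ _ hxy => add_le_add_left (neg_le_neg (hodd.strictMono_pow.monotone hxy)) t

theorem norm_iterate_neg_pow_add_ofReal (t : ℝ) (n : ℕ) :
    ‖(fun z : ℂ => -z ^ d + t)^[n] 0‖ = ‖(fun x : ℝ => -x ^ d + t)^[n] 0‖ := by
  have hsemi : Semiconj ((↑) : ℝ → ℂ) (fun x : ℝ => -x ^ d + t) (fun z : ℂ => -z ^ d + t) :=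
    fun x => by push_cast; rfl
  rw [← Complex.ofReal_zero, ← hsemi.iterate_right n, Complex.norm_real]

theorem iterate_neg_pow_add_mem_Icc (hodd : Odd d) {a b : ℝ} (ha : 0 ≤ a) (hb : 0 ≤ b)
    (hab : a ^ d + b ^ d = a + b) (n : ℕ) :
    (fun x : ℝ => -x ^ d + (a - b ^ d))^[n] 0 ∈ Icc (-b) a := by
  have hcycle := (antitone_neg_pow_add hodd (a - b ^ d)).mapsTo_Icc_of_two_cycle
    (l := -b) (u := a) (by simp [hodd.neg_pow]) (by linarith)
  exact hcycle.iterate n ⟨by linarith, ha⟩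

theorem exists_two_cycle_of_bddBelow_iterate (hodd : Odd d) {t : ℝ} (ht : 1 ≤ t)
    (hbdd : BddBelow (range fun n => (fun x : ℝ => -x ^ d + t)^[n] 0)) :
    ∃ a b : ℝ, 0 ≤ a ∧ 0 ≤ b ∧ a ^ d + b ^ d = a + b ∧ t = a - b ^ d := by
  have hd : d ≠ 0 := hodd.pos.ne'
  have hdrop : -(-(0 : ℝ) ^ d + t) ^ d + t ≤ 0 := by
    simpa [zero_pow hd] using le_self_pow₀ ht hd
  obtain ⟨L, hL, hfix⟩ := (antitone_neg_pow_add hodd t).exists_two_periodic_le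
    (by fun_prop) hdrop hbdd
  have hLd : L ^ d ≤ 0 := hodd.pow_nonpos hL
  refine ⟨-L ^ d + t, -L, by linarith, by linarith, ?_, ?_⟩
  · rw [hodd.neg_pow]
    linarith
  · rw [hodd.neg_pow]
    ring

end NegPowAdd

theorem stmt_15_general (d : ℕ) (hodd : Odd d) :
    {c : ℂ | BddAbove (Set.range fun n => ‖(fun z : ℂ => -z ^ d + c)^[n] 0‖)} ∩
      {c : ℂ | ∃ t : ℝ, 1 ≤ t ∧ c = (t : ℂ)} =
    {c : ℂ | ∃ a b : ℝ, 0 ≤ a ∧ 0 ≤ b ∧ a ^ d + b ^ d = a + b ∧ c = ((a - b ^ d : ℝ) : ℂ)} ∩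
      {c : ℂ | ∃ t : ℝ, 1 ≤ t ∧ c = (t : ℂ)} := by
  ext c
  simp only [mem_inter_iff, mem_ofPred_eq]
  constructor
  · rintro ⟨⟨M, hM⟩, t, ht, rfl⟩
    have hbdd : BddBelow (range fun n => (fun x : ℝ => -x ^ d + t)^[n] 0) :=
      ⟨-M, forall_mem_range.2 fun n => neg_le_of_abs_le <| by
        simpa [norm_iterate_neg_pow_add_ofReal] using hM (mem_range_self n)⟩
    obtain ⟨a, b, ha, hb, hab, rfl⟩ := exists_two_cycle_of_bddBelow_iterate hodd ht hbdd
    exact ⟨⟨a, b, ha, hb, hab, rfl⟩, a - b ^ d, ht, rfl⟩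
  · rintro ⟨⟨a, b, ha, hb, hab, rfl⟩, hreal⟩
    refine ⟨⟨max a b, forall_mem_range.2 fun n => ?_⟩, hreal⟩
    obtain ⟨hlo, hhi⟩ := iterate_neg_pow_add_mem_Icc hodd ha hb hab n
    rw [norm_iterate_neg_pow_add_ofReal, Real.norm_eq_abs, abs_le]
    constructor <;> linarith [le_max_left a b, le_max_right a b]

/-- For odd `d ≥ 3`,
`N_d ∩ [1, ∞) = {a - b^d : a, b ≥ 0, a^d + b^d = a + b} ∩ [1, ∞)`. -/
theorem stmt_15 (d : ℕ) (hd : 3 ≤ d) (hodd : Odd d) :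
    {c : ℂ | BddAbove (Set.range fun n => ‖(fun z : ℂ => -z ^ d + c)^[n] 0‖)} ∩
      {c : ℂ | ∃ t : ℝ, 1 ≤ t ∧ c = (t : ℂ)} =
    {c : ℂ | ∃ a b : ℝ, 0 ≤ a ∧ 0 ≤ b ∧ a ^ d + b ^ d = a + b ∧ c = ((a - b ^ d : ℝ) : ℂ)} ∩
      {c : ℂ | ∃ t : ℝ, 1 ≤ t ∧ c = (t : ℂ)} :=
  stmt_15_general d hodd
end

section
/- Let d be an odd integer with d ≥ 3 and let ω ∈ ℂ satisfy ω^{d-1} = -1. Then M_d ∩ ℝ⁺ω = ω · (N_d ∩ ℝ⁺); that is, for t ≥ 0, tω ∈ M_d if and only if t ∈ N_d. -/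
/-! When `ω ^ d = -ω`, multiplication by `ω` conjugates `z ↦ -z ^ d + t` to `z ↦ z ^ d + t ω`,
so the two critical orbits differ by the factor `ω`, which has modulus one. -/

theorem norm_eq_one_of_pow_eq_neg_one {𝕜 : Type*} [NormedDivisionRing 𝕜] {ω : 𝕜} {k : ℕ}
    (hk : k ≠ 0) (h : ω ^ k = -1) : ‖ω‖ = 1 :=
  (pow_left_inj₀ (norm_nonneg ω) zero_le_one hk).1 <| by
    rw [← norm_pow, h, norm_neg, norm_one, one_pow]

theorem semiconj_mul_left_neg_pow_add {R : Type*} [CommRing R] {ω : R} {d : ℕ}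
    (hω : ω ^ d = -ω) (c : R) :
    Function.Semiconj (ω * ·) (fun z => -z ^ d + c) (fun z => z ^ d + c * ω) := by
  intro z
  simp only [mul_pow, hω]
  ring

theorem stmt_18_general (d : ℕ) (hd : 3 ≤ d)
    (ω : ℂ) (hω : ω ^ (d - 1) = -1) :
    ∀ t : ℝ, 0 ≤ t →
      (BddAbove (Set.range fun n =>
          ‖(fun z : ℂ => z ^ d + (t : ℂ) * ω)^[n] 0‖) ↔
        BddAbove (Set.range fun n =>
          ‖(fun z : ℂ => -z ^ d + (t : ℂ))^[n] 0‖)) := by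
  intro t _
  have hωd : ω ^ d = -ω := by
    rw [← Nat.sub_add_cancel (by omega : 1 ≤ d), pow_succ, hω, neg_one_mul]
  have hnorm : ‖ω‖ = 1 := norm_eq_one_of_pow_eq_neg_one (by omega) hω
  have horbit (n : ℕ) : ‖(fun z : ℂ => z ^ d + (t : ℂ) * ω)^[n] 0‖ =
      ‖(fun z : ℂ => -z ^ d + (t : ℂ))^[n] 0‖ := by
    have h := (semiconj_mul_left_neg_pow_add hωd (t : ℂ)).iterate_right n 0
    rw [mul_zero] at h
    rw [← h, norm_mul, hnorm, one_mul]
  simp only [horbit]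

/-- For odd `d ≥ 3` and `ω^(d-1) = -1`, `M_d ∩ ℝ⁺ω = ω ⬝ (N_d ∩ ℝ⁺)`: for `t ≥ 0`,
`tω ∈ M_d` if and only if `t ∈ N_d`. -/
theorem stmt_18 (d : ℕ) (hd : 3 ≤ d) (hodd : Odd d)
    (ω : ℂ) (hω : ω ^ (d - 1) = -1) :
    ∀ t : ℝ, 0 ≤ t →
      (BddAbove (Set.range fun n =>
          ‖(fun z : ℂ => z ^ d + (t : ℂ) * ω)^[n] 0‖) ↔
        BddAbove (Set.range fun n =>
          ‖(fun z : ℂ => -z ^ d + (t : ℂ))^[n] 0‖)) :=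
  stmt_18_general d hd ω hω
end

section
/- Let d be an odd integer with d ≥ 3. The maximum μ(d) of f(a,b) := a - b^d over the set {(a,b) : a, b ≥ 0, a^d + b^d = a + b} is attained at a point (a₀, b₀) with a₀ > 0 and b₀ > 0 satisfying a₀ b₀ = d^{-2/(d-1)}. -/
/-!
The constraint set `a ^ d + b ^ d = a + b`, `a, b ≥ 0`, lies in `[0, 2]²`, so it is compact
and `f(a, b) = a - b ^ d` attains its maximum on it. Near `(1, 0)` the curve has points where
`f > 1`, so a maximiser has `a₀ > 1`, hence `b₀ > 0`: the only point of the curve with `b = 0`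
and `a ≥ 1` is `(1, 0)`. The maximiser therefore lies in the open quadrant, where the Lagrange
condition for `f` under the constraint reads `(d a₀ ^ (d - 1)) (d b₀ ^ (d - 1)) = 1`.
-/

open Set Topology

def powCurve (d : ℕ) : Set (ℝ × ℝ) :=
  {p | 0 ≤ p.1 ∧ 0 ≤ p.2 ∧ p.1 ^ d + p.2 ^ d = p.1 + p.2}

lemma pow_sub_one_le_of_le_two {a : ℝ} (h₁ : 1 ≤ a) (h₂ : a ≤ 2) (n : ℕ) :
    a ^ n - 1 ≤ (2 ^ n - 1) * (a - 1) := by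
  induction n with
  | zero => simp
  | succ n ih =>
    have hn : 0 ≤ a ^ n - 1 := sub_nonneg.2 (one_le_pow₀ h₁)
    rw [pow_succ, pow_succ]
    nlinarith [mul_nonneg (sub_nonneg.2 h₂) hn]

lemma IsLocalExtrOn.apply_mul_apply_eq_of_hasStrictFDerivAt {f φ : ℝ × ℝ → ℝ}
    {f' φ' : ℝ × ℝ →L[ℝ] ℝ} {x₀ : ℝ × ℝ} (hextr : IsLocalExtrOn φ {x | f x = f x₀} x₀)
    (hf : HasStrictFDerivAt f f' x₀) (hφ : HasStrictFDerivAt φ φ' x₀) :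
    f' (1, 0) * φ' (0, 1) = f' (0, 1) * φ' (1, 0) := by
  obtain ⟨s, t, hst, h⟩ := hextr.exists_multipliers_of_hasStrictFDerivAt_1d hf hφ
  have e₁ := DFunLike.congr_fun h (1, 0)
  have e₂ := DFunLike.congr_fun h (0, 1)
  simp only [add_apply, smul_apply, smul_eq_mul, zero_apply] at e₁ e₂
  have hs : s * (f' (1, 0) * φ' (0, 1) - f' (0, 1) * φ' (1, 0)) = 0 := by
    linear_combination φ' (0, 1) * e₁ - φ' (1, 0) * e₂
  have ht : t * (f' (1, 0) * φ' (0, 1) - f' (0, 1) * φ' (1, 0)) = 0 := by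
    linear_combination f' (1, 0) * e₂ - f' (0, 1) * e₁
  by_contra hne
  have hdet := sub_ne_zero.2 hne
  exact hst (Prod.ext ((mul_eq_zero.1 hs).resolve_right hdet)
    ((mul_eq_zero.1 ht).resolve_right hdet))

lemma eq_rpow_of_sq_mul_pow_eq_one {d : ℕ} {t : ℝ} (ht : 0 ≤ t) (hd : 2 ≤ d)
    (h : (d : ℝ) ^ 2 * t ^ (d - 1) = 1) : t = (d : ℝ) ^ (-(2 : ℝ) / ((d : ℝ) - 1)) := by
  have hd₀ : (0 : ℝ) < d := by positivity
  have hd₁ : ((d - 1 : ℕ) : ℝ) = (d : ℝ) - 1 := by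
    rw [Nat.cast_sub (by omega), Nat.cast_one]
  refine (pow_left_inj₀ ht (Real.rpow_nonneg hd₀.le _) (n := d - 1) (by omega)).1 ?_
  rw [← Real.rpow_natCast ((d : ℝ) ^ _) (d - 1), ← Real.rpow_mul hd₀.le, hd₁,
    div_mul_cancel₀ _ (by rw [← hd₁]; exact_mod_cast (by omega : d - 1 ≠ 0)),
    Real.rpow_neg hd₀.le, Real.rpow_two]
  exact eq_inv_of_mul_eq_one_right h

namespace powCurve

variable {d : ℕ}

lemma subset_Icc (hd : 2 ≤ d) : powCurve d ⊆ Icc 0 2 ×ˢ Icc 0 2 := by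
  rintro ⟨a, b⟩ ⟨ha, hb, hab⟩
  have hm : max a b ≤ 2 := by
    by_contra! hm
    have hpow : (max a b) ^ d ≤ a ^ d + b ^ d := by
      rcases max_choice a b with h | h <;> rw [h] <;>
      linarith [pow_nonneg ha d, pow_nonneg hb d]
    have hsq : (max a b) ^ 2 ≤ (max a b) ^ d := pow_le_pow_right₀ (by linarith) hd
    nlinarith [le_max_left a b, le_max_right a b]
  exact ⟨⟨ha, (le_max_left a b).trans hm⟩, hb, (le_max_right a b).trans hm⟩

lemma isCompact (hd : 2 ≤ d) : IsCompact (powCurve d) :=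
  (isCompact_Icc.prod isCompact_Icc).of_isClosed_subset
    ((isClosed_le continuous_const continuous_fst).inter
      ((isClosed_le continuous_const continuous_snd).inter
        (isClosed_eq (by fun_prop) (by fun_prop))))
    (subset_Icc hd)

lemma exists_one_lt (hd : 2 ≤ d) : ∃ p ∈ powCurve d, 1 < p.1 - p.2 ^ d := by
  set C : ℝ := 2 ^ d - 2
  have hC : 2 ≤ C := by
    have : (2 : ℝ) ^ 2 ≤ 2 ^ d := pow_le_pow_right₀ (by norm_num) hd
    linarith
  set b : ℝ := (C + 2)⁻¹
  have hb₀ : 0 < b := by positivity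
  have hbC : (C + 2) * b = 1 := mul_inv_cancel₀ (by linarith)
  have hb₁ : b ≤ 1 := by nlinarith
  have hbd : b ^ d ≤ b ^ 2 := pow_le_pow_of_le_one hb₀.le hb₁ hd
  -- `C` bounds the slope of `x ↦ x ^ d - x` on `[1, 2]`, so `a - 1 ≥ (b - b ^ d) / C > b ^ d`.
  obtain ⟨a, ⟨ha₁, ha₂⟩, ha⟩ : ∃ a ∈ Icc (1 : ℝ) 2, a ^ d - a = b - b ^ d :=
    intermediate_value_Icc (by norm_num) (by fun_prop)
      ⟨by norm_num; nlinarith, by linarith [pow_nonneg hb₀.le d]⟩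
  have hlin : a ^ d - a ≤ C * (a - 1) := by linarith [pow_sub_one_le_of_le_two ha₁ ha₂ d]
  refine ⟨(a, b), ⟨by linarith, hb₀.le, by linarith⟩, ?_⟩
  show 1 < a - b ^ d
  nlinarith [pow_nonneg hb₀.le d]

lemma one_lt_fst_and_snd_pos {p : ℝ × ℝ} (hd : 2 ≤ d) (hp : p ∈ powCurve d)
    (h : 1 < p.1 - p.2 ^ d) : 1 < p.1 ∧ 0 < p.2 := by
  obtain ⟨-, hb, hab⟩ := hp
  have h₁ : 1 < p.1 := by linarith [pow_nonneg hb d]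
  refine ⟨h₁, hb.lt_of_ne' fun h₀ => ?_⟩
  rw [h₀, zero_pow (by omega), add_zero, add_zero] at hab
  exact (lt_self_pow₀ h₁ (by omega)).ne' hab

lemma sq_mul_mul_pow_eq_one {p : ℝ × ℝ} (hp₁ : 0 < p.1) (hp₂ : 0 < p.2)
    (hp : p ∈ powCurve d) (hmax : IsMaxOn (fun q : ℝ × ℝ => q.1 - q.2 ^ d) (powCurve d) p) :
    (d : ℝ) ^ 2 * (p.1 * p.2) ^ (d - 1) = 1 := by
  set g : ℝ × ℝ → ℝ := fun q => (q.1 ^ d - q.1) + (q.2 ^ d - q.2)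
  set u : ℝ := d * p.1 ^ (d - 1)
  set v : ℝ := d * p.2 ^ (d - 1)
  have hfst := hasStrictFDerivAt_fst (𝕜 := ℝ) (p := p)
  have hsnd := hasStrictFDerivAt_snd (𝕜 := ℝ) (p := p)
  have hpow₁ := (hasStrictDerivAt_pow d p.1).comp_hasStrictFDerivAt p hfst
  have hpow₂ := (hasStrictDerivAt_pow d p.2).comp_hasStrictFDerivAt p hsnd
  have hg : HasStrictFDerivAt g
      ((u • .fst ℝ ℝ ℝ - .fst ℝ ℝ ℝ) + (v • .snd ℝ ℝ ℝ - .snd ℝ ℝ ℝ)) p :=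
    (hpow₁.sub hfst).add (hpow₂.sub hsnd)
  have hf : HasStrictFDerivAt (fun q : ℝ × ℝ => q.1 - q.2 ^ d)
      (.fst ℝ ℝ ℝ - v • .snd ℝ ℝ ℝ) p :=
    hfst.sub hpow₂
  have hquad : ∀ᶠ q : ℝ × ℝ in 𝓝 p, 0 < q.1 ∧ 0 < q.2 :=
    (continuous_fst.continuousAt.eventually (lt_mem_nhds hp₁)).and
      (continuous_snd.continuousAt.eventually (lt_mem_nhds hp₂))
  have hextr : IsLocalExtrOn (fun q : ℝ × ℝ => q.1 - q.2 ^ d) {q | g q = g p} p := by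
    refine Or.inr ?_
    filter_upwards [nhdsWithin_le_nhds hquad, self_mem_nhdsWithin] with q hq hgq
    exact hmax ⟨hq.1.le, hq.2.le, by simp only [g] at hgq; linarith [hp.2.2]⟩
  have hdet := hextr.apply_mul_apply_eq_of_hasStrictFDerivAt hg hf
  simp only [add_apply, sub_apply, smul_apply, ContinuousLinearMap.coe_fst',
    ContinuousLinearMap.coe_snd', smul_eq_mul] at hdet
  rw [mul_pow]
  linear_combination -hdet

end powCurve

theorem stmt_19_general (d : ℕ) (hd : 3 ≤ d) :
    ∃ a₀ b₀ : ℝ, 0 < a₀ ∧ 0 < b₀ ∧ a₀ ^ d + b₀ ^ d = a₀ + b₀ ∧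
      a₀ * b₀ = (d : ℝ) ^ (-(2 : ℝ) / ((d : ℝ) - 1)) ∧
      IsGreatest {x : ℝ | ∃ a b : ℝ, 0 ≤ a ∧ 0 ≤ b ∧ a ^ d + b ^ d = a + b ∧ x = a - b ^ d}
        (a₀ - b₀ ^ d) := by
  have hd₂ : 2 ≤ d := by omega
  obtain ⟨q, hq, hq₁⟩ := powCurve.exists_one_lt hd₂
  obtain ⟨p, hp, hmax⟩ := (powCurve.isCompact hd₂).exists_isMaxOn ⟨q, hq⟩
    (by fun_prop : Continuous fun q : ℝ × ℝ => q.1 - q.2 ^ d).continuousOn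
  obtain ⟨hp₁, hp₂⟩ := powCurve.one_lt_fst_and_snd_pos hd₂ hp (hq₁.trans_le (hmax hq))
  have hp₁' : 0 < p.1 := by linarith
  refine ⟨p.1, p.2, hp₁', hp₂, hp.2.2,
    eq_rpow_of_sq_mul_pow_eq_one (mul_pos hp₁' hp₂).le hd₂
      (powCurve.sq_mul_mul_pow_eq_one hp₁' hp₂ hp hmax),
    ⟨p.1, p.2, hp.1, hp.2.1, hp.2.2, rfl⟩, ?_⟩
  rintro x ⟨a, b, ha, hb, hab, rfl⟩
  exact hmax (show (a, b) ∈ powCurve d from ⟨ha, hb, hab⟩)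

/-- For odd `d ≥ 3`, the maximum `μ(d)` of `f(a,b) = a - b^d` over
`{(a,b) : a, b ≥ 0, a^d + b^d = a + b}` is attained at a point `(a₀, b₀)` with
`a₀ > 0`, `b₀ > 0` and `a₀ b₀ = d^(-2/(d-1))`. -/
theorem stmt_19 (d : ℕ) (hd : 3 ≤ d) (hodd : Odd d) :
    ∃ a₀ b₀ : ℝ, 0 < a₀ ∧ 0 < b₀ ∧ a₀ ^ d + b₀ ^ d = a₀ + b₀ ∧
      a₀ * b₀ = (d : ℝ) ^ (-(2 : ℝ) / ((d : ℝ) - 1)) ∧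
      IsGreatest {x : ℝ | ∃ a b : ℝ, 0 ≤ a ∧ 0 ≤ b ∧ a ^ d + b ^ d = a + b ∧ x = a - b ^ d}
        (a₀ - b₀ ^ d) :=
  stmt_19_general d hd
end
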